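/- arXiv:2008.08943 — 2 statements merged into one kernel-verified Lean document; each statement's English description precedes it below -/
import Mathlib

section
/- Let n ≥ 2. The set S_{n−1,n−2} is the disjoint union, over 0 < p_1 < n, of the subsets S_{n−1}((0, p_1, n)); consequently the maps Ψ_{(0,p_1,n)} combine to a bijection S_{n−1,n−2} ≅ ⨆_{q_1+q_2=n, q_1,q_2 ≥ 1} Shuff(q_1−1, q_2−1) × S_{q_1−1} × S_{q_2−1}. Moreover the map i ↦ (i, 0) (appending a final entry 0) is a bijection S_{n−1,n−2} → S_{n−1}. -/
/-- `memS n l i` means `i ∈ S_{n,l}`: a sequence of length `l` with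
`0 ≤ i_s ≤ n - s` for `1 ≤ s ≤ l` (here `i.getD t 0` is the entry `i_{t+1}`). -/
def memS (n l : ℕ) (i : List ℕ) : Prop :=
  i.length = l ∧ ∀ t < l, i.getD t 0 + t + 1 ≤ n

/-- The ordered set remaining from `{0, …, n}` after performing the first `r`
removal steps prescribed by `i`: at each step the element at (0-indexed)
position `i_r + 1` of the remaining set is removed. -/
def restAfter (n : ℕ) (i : List ℕ) (r : ℕ) : List ℕ :=
  (i.take r).foldl (fun L a => L.eraseIdx (a + 1)) (List.range (n + 1))

/-- The ordered set remaining from `{0, …, n}` after the whole removal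
procedure prescribed by `i`. -/
def restList (n : ℕ) (i : List ℕ) : List ℕ := restAfter n i i.length

/-- The element `e_{r+1}` removed at (0-indexed) step `r` of the removal
procedure on `{0, …, n}` prescribed by `i`. -/
def elemRemoved (n : ℕ) (i : List ℕ) (r : ℕ) : ℕ :=
  (restAfter n i r).getD (i.getD r 0 + 1) 0

/-- The component `α_s` of `Ψ_p(i)`, for the interval `(a, b) = (p_{s-1}, p_s)`:
the set of (0-indexed) steps at which an element strictly between `a` and `b`
is removed. -/
def psiAlpha (n : ℕ) (i : List ℕ) (a b : ℕ) : Finset ℕ :=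
  (Finset.range i.length).filter
    (fun r => a < elemRemoved n i r ∧ elemRemoved n i r < b)

/-- The component `j_s` of `Ψ_p(i)`, for the interval `(a, b) = (p_{s-1}, p_s)`:
its `u`-th entry is `w - 1` where the `u`-th element of `(a, b)` to be removed
is, at the moment of its removal, the `w`-th smallest element of `(a, b)` still
present. -/
def psiJ (n : ℕ) (i : List ℕ) (a b : ℕ) : List ℕ :=
  ((List.range i.length).filter
      (fun r => decide (a < elemRemoved n i r ∧ elemRemoved n i r < b))).map
    (fun r => ((restAfter n i r).filter
      (fun y => decide (a < y ∧ y < elemRemoved n i r))).length)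

/-- `α` is a `(q_0, …, q_{k-1})`-shuffle: an ordered partition of
`{0, …, q_0 + ⋯ + q_{k-1} - 1}` with `|α_s| = q_s`. -/
def IsShuffleF {k : ℕ} (q : Fin k → ℕ) (α : Fin k → Finset ℕ) : Prop :=
  (∀ s, (α s).card = q s) ∧ (∀ s t, s ≠ t → Disjoint (α s) (α t)) ∧
    Finset.univ.biUnion α = Finset.range (∑ s, q s)

/-- The sign exponent `(α)` of a shuffle: the number of pairs `(a, b)` with
`a ∈ α_s`, `b ∈ α_t`, `s < t` and `a > b`. -/
def shuffleExpN (k : ℕ) (α : ℕ → Finset ℕ) : ℕ :=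
  ∑ s ∈ Finset.range k, ∑ t ∈ Finset.range k,
    if s < t then ∑ a ∈ α s, ((α t).filter (fun b => b < a)).card else 0

/-! ### Auxiliary machinery -/

def pstep (L : List ℕ) (a : ℕ) : List ℕ := L.eraseIdx (a + 1)

def pproc (L : List ℕ) (i : List ℕ) : List ℕ := i.foldl pstep L

@[simp] lemma pproc_nil (L : List ℕ) : pproc L [] = L := rfl
@[simp] lemma pproc_cons (L : List ℕ) (a : ℕ) (i : List ℕ) :
    pproc L (a :: i) = pproc (pstep L a) i := rfl

lemma restAfter_eq (n : ℕ) (i : List ℕ) (r : ℕ) :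
    restAfter n i r = pproc (List.range (n + 1)) (i.take r) := rfl

lemma restList_eq (n : ℕ) (i : List ℕ) :
    restList n i = pproc (List.range (n + 1)) i := by
  simp [restList, restAfter_eq, List.take_length]

/-- `Compat cA cB i`: each instruction removes either one of the `cA` elements
below the survivor or one of the `cB` elements above it. -/
def Compat : ℕ → ℕ → List ℕ → Prop
  | _, _, [] => True
  | cA, cB, a :: i => (a < cA ∧ Compat (cA - 1) cB i) ∨
      (∃ b, b < cB ∧ a = cA + 1 + b ∧ Compat cA (cB - 1) i)

def exS : ℕ → List ℕ → List Bool
  | _, [] => []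
  | c, a :: i => if a < c then true :: exS (c - 1) i else false :: exS c i

def exJ1 : ℕ → List ℕ → List ℕ
  | _, [] => []
  | c, a :: i => if a < c then a :: exJ1 (c - 1) i else exJ1 c i

def exJ2 : ℕ → List ℕ → List ℕ
  | _, [] => []
  | c, a :: i => if a < c then exJ2 (c - 1) i else (a - c - 1) :: exJ2 c i

def build : ℕ → List Bool → List ℕ → List ℕ → List ℕ
  | _, [], _, _ => []
  | c, true :: σ, a :: j1, j2 => a :: build (c - 1) σ j1 j2
  | _, true :: _, [], _ => []
  | c, false :: σ, j1, b :: j2 => (c + 1 + b) :: build c σ j1 j2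
  | _, false :: _, _, [] => []

lemma exS_length : ∀ (c : ℕ) (i : List ℕ), (exS c i).length = i.length
  | _, [] => rfl
  | c, a :: i => by
    by_cases h : a < c <;> simp [exS, h, exS_length]

lemma roundtrip1 : ∀ (i : List ℕ) (cA cB : ℕ), Compat cA cB i →
    build cA (exS cA i) (exJ1 cA i) (exJ2 cA i) = i
  | [], _, _, _ => rfl
  | a :: i, cA, cB, h => by
    rcases h with ⟨ha, h⟩ | ⟨b, hb, rfl, h⟩
    · simp only [exS, exJ1, exJ2, if_pos ha, build]
      rw [roundtrip1 i _ _ h]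
    · have hna : ¬ (cA + 1 + b < cA) := by omega
      simp only [exS, exJ1, exJ2, if_neg hna, build]
      have : cA + 1 + b - cA - 1 = b := by omega
      rw [this, roundtrip1 i _ _ h]

lemma CVALID : ∀ (i : List ℕ) (cA cB : ℕ), Compat cA cB i →
    ∀ r < i.length, i.getD r 0 + r ≤ cA + cB
  | [], _, _, _, r, hr => by simp at hr
  | a :: i, cA, cB, h, r, hr => by
    rcases h with ⟨ha, h⟩ | ⟨b, hb, rfl, h⟩
    · match r with
      | 0 => simp only [List.getD_cons_zero]; omega
      | r + 1 =>
        have := CVALID i _ _ h r (by simpa using hr)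
        have hA : 1 ≤ cA := by omega
        simp only [List.getD_cons_succ]
        omega
    · match r with
      | 0 => simp only [List.getD_cons_zero]; omega
      | r + 1 =>
        have := CVALID i _ _ h r (by simpa using hr)
        have hB : 1 ≤ cB := by omega
        simp only [List.getD_cons_succ]
        omega

lemma EX : ∀ (i : List ℕ) (cA cB : ℕ), Compat cA cB i → i.length = cA + cB →
    memS cA cA (exJ1 cA i) ∧ memS cB cB (exJ2 cA i) ∧
      (exS cA i).count true = cA ∧ (exS cA i).count false = cB
  | [], cA, cB, _, hl => by
    simp only [List.length_nil] at hl
    have : cA = 0 ∧ cB = 0 := by constructor <;> omega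
    obtain ⟨rfl, rfl⟩ := this
    refine ⟨⟨rfl, ?_⟩, ⟨rfl, ?_⟩, rfl, rfl⟩ <;> intro t ht <;> omega
  | a :: i, cA, cB, h, hl => by
    rcases h with ⟨ha, h⟩ | ⟨b, hb, rfl, h⟩
    · obtain ⟨⟨hl1, hb1⟩, ⟨hl2, hb2⟩, hct, hcf⟩ :=
        EX i (cA - 1) cB h (by simp at hl; omega)
      simp only [exS, exJ1, exJ2, if_pos ha]
      refine ⟨⟨by simp [hl1]; omega, ?_⟩, ⟨hl2, hb2⟩, ?_, ?_⟩
      · intro t ht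
        match t with
        | 0 => simpa using ha
        | t + 1 =>
          simp only [List.getD_cons_succ]
          have := hb1 t (by omega)
          omega
      · simp [hct]; omega
      · simpa using hcf
    · have hna : ¬ (cA + 1 + b < cA) := by omega
      obtain ⟨⟨hl1, hb1⟩, ⟨hl2, hb2⟩, hct, hcf⟩ :=
        EX i cA (cB - 1) h (by simp at hl; omega)
      simp only [exS, exJ1, exJ2, if_neg hna]
      refine ⟨⟨hl1, hb1⟩, ⟨by simp [hl2]; omega, ?_⟩, ?_, ?_⟩
      · intro t ht
        match t with
        | 0 =>
          simp only [List.getD_cons_zero]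
          omega
        | t + 1 =>
          simp only [List.getD_cons_succ]
          have := hb2 t (by omega)
          omega
      · simpa using hct
      · simp [hcf]; omega

lemma PRE : ∀ (i : List ℕ) (cT : ℕ), i.length + 1 = cT →
    (∀ r < i.length, i.getD r 0 + r + 1 ≤ cT) →
    ∃ c, c < cT ∧ Compat c (cT - 1 - c) i
  | [], cT, hl, _ => ⟨0, by omega, trivial⟩
  | a :: i, cT, hl, hv => by
    simp only [List.length_cons] at hl
    obtain ⟨c', hc', hcomp⟩ := PRE i (cT - 1) (by omega) (by
      intro r hr
      have := hv (r + 1) (by simpa using Nat.succ_lt_succ hr)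
      simp only [List.getD_cons_succ] at this
      omega)
    have ha : a + 1 ≤ cT := by simpa using hv 0 (by simp)
    by_cases hac : a < c' + 1
    · refine ⟨c' + 1, by omega, Or.inl ⟨hac, ?_⟩⟩
      have h1 : c' + 1 - 1 = c' := by omega
      have h2 : cT - 1 - (c' + 1) = cT - 1 - 1 - c' := by omega
      rw [h1, h2]
      exact hcomp
    · refine ⟨c', by omega, Or.inr ⟨a - c' - 1, by omega, by omega, ?_⟩⟩
      have h2 : cT - 1 - c' - 1 = cT - 1 - 1 - c' := by omega
      rw [h2]
      exact hcomp

def BOK : ℕ → ℕ → List Bool → List ℕ → List ℕ → Prop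
  | _, _, [], j1, j2 => j1 = [] ∧ j2 = []
  | cA, cB, true :: σ, j1, j2 =>
      ∃ a j1', j1 = a :: j1' ∧ a < cA ∧ BOK (cA - 1) cB σ j1' j2
  | cA, cB, false :: σ, j1, j2 =>
      ∃ b j2', j2 = b :: j2' ∧ b < cB ∧ BOK cA (cB - 1) σ j1 j2'

lemma BOK_of : ∀ (σ : List Bool) (cA cB : ℕ) (j1 j2 : List ℕ),
    σ.count true = cA → σ.count false = cB → memS cA cA j1 → memS cB cB j2 →
    BOK cA cB σ j1 j2
  | [], cA, cB, j1, j2, ht, hf, h1, h2 => by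
    simp at ht hf
    subst ht; subst hf
    exact ⟨List.eq_nil_of_length_eq_zero h1.1, List.eq_nil_of_length_eq_zero h2.1⟩
  | true :: σ, cA, cB, j1, j2, ht, hf, h1, h2 => by
    simp [List.count_cons] at ht hf
    have hA : 1 ≤ cA := by omega
    match j1, h1 with
    | a :: j1', ⟨hl1, hb1⟩ =>
      refine ⟨a, j1', rfl, by simpa using hb1 0 (by simp at hl1 ⊢; omega), ?_⟩
      refine BOK_of σ (cA - 1) cB j1' j2 (by omega) (by omega) ⟨?_, ?_⟩ h2
      · simp at hl1; omega
      · intro t htl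
        have := hb1 (t + 1) (by omega)
        simp only [List.getD_cons_succ] at this
        omega
    | [], ⟨hl1, _⟩ => exact absurd hl1.symm (by simp; omega)
  | false :: σ, cA, cB, j1, j2, ht, hf, h1, h2 => by
    simp [List.count_cons] at ht hf
    have hB : 1 ≤ cB := by omega
    match j2, h2 with
    | b :: j2', ⟨hl2, hb2⟩ =>
      refine ⟨b, j2', rfl, by simpa using hb2 0 (by simp at hl2 ⊢; omega), ?_⟩
      refine BOK_of σ cA (cB - 1) j1 j2' (by omega) (by omega) h1 ⟨?_, ?_⟩
      · simp at hl2; omega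
      · intro t htl
        have := hb2 (t + 1) (by omega)
        simp only [List.getD_cons_succ] at this
        omega
    | [], ⟨hl2, _⟩ => exact absurd hl2.symm (by simp; omega)

lemma BOK_build : ∀ (σ : List Bool) (cA cB : ℕ) (j1 j2 : List ℕ),
    BOK cA cB σ j1 j2 →
    Compat cA cB (build cA σ j1 j2) ∧ exS cA (build cA σ j1 j2) = σ ∧
      exJ1 cA (build cA σ j1 j2) = j1 ∧ exJ2 cA (build cA σ j1 j2) = j2 ∧
      (build cA σ j1 j2).length = σ.length
  | [], cA, cB, j1, j2, h => by
    obtain ⟨rfl, rfl⟩ := h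
    exact ⟨trivial, rfl, rfl, rfl, rfl⟩
  | true :: σ, cA, cB, j1, j2, h => by
    obtain ⟨a, j1', rfl, ha, h⟩ := h
    obtain ⟨hc, hs, h1, h2, hlen⟩ := BOK_build σ (cA - 1) cB j1' j2 h
    simp only [build, exS, exJ1, exJ2, if_pos ha]
    exact ⟨Or.inl ⟨ha, hc⟩, by rw [hs], by rw [h1], by rw [h2], by simp [hlen]⟩
  | false :: σ, cA, cB, j1, j2, h => by
    obtain ⟨b, j2', rfl, hb, h⟩ := h
    obtain ⟨hc, hs, h1, h2, hlen⟩ := BOK_build σ cA (cB - 1) j1 j2' h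
    have hna : ¬ (cA + 1 + b < cA) := by omega
    simp only [build, exS, exJ1, exJ2, if_neg hna]
    have hb' : cA + 1 + b - cA - 1 = b := by omega
    exact ⟨Or.inr ⟨b, hb, rfl, hc⟩, by rw [hs], by rw [h1], by rw [hb', h2],
      by simp [hlen]⟩

/-! ### Generic recursion over the removal process -/

def recG {α : Type} (G : List ℕ → ℕ → List α) : List ℕ → List ℕ → List α
  | _, [] => []
  | S, a :: i => G S a ++ recG G (pstep S a) i

lemma filter_map_eq_flatMap {α β : Type} (l : List α) (p : α → Bool) (f : α → β) :
    (l.filter p).map f = l.flatMap (fun x => if p x then [f x] else []) := by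
  induction l with
  | nil => rfl
  | cons a l ih => by_cases h : p a <;> simp [h, ih]

lemma flatMap_range_proc {α : Type} (G : List ℕ → ℕ → List α) :
    ∀ (i S : List ℕ),
      (List.range i.length).flatMap
        (fun r => G (pproc S (i.take r)) (i.getD r 0)) = recG G S i
  | [], S => rfl
  | a :: i, S => by
    rw [List.length_cons, List.range_succ_eq_map, List.flatMap_cons, List.flatMap_map]
    show G (pproc S ((a :: i).take 0)) ((a :: i).getD 0 0) ++ _ = recG G S (a :: i)
    rw [recG]
    congr 1
    rw [← flatMap_range_proc G i (pstep S a)]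
    apply List.flatMap_congr
    intro r _
    simp [List.take_succ_cons, List.getD_cons_succ]

def eRem (S i : List ℕ) (r : ℕ) : ℕ :=
  (pproc S (i.take r)).getD (i.getD r 0 + 1) 0

lemma elemRemoved_eq (n : ℕ) (i : List ℕ) (r : ℕ) :
    elemRemoved n i r = eRem (List.range (n + 1)) i r := rfl

lemma eRem_zero (S : List ℕ) (a : ℕ) (i : List ℕ) :
    eRem S (a :: i) 0 = S.getD (a + 1) 0 := rfl

lemma eRem_succ (S : List ℕ) (a : ℕ) (i : List ℕ) (r : ℕ) :
    eRem S (a :: i) (r + 1) = eRem (pstep S a) i r := by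
  simp [eRem, List.take_succ_cons, List.getD_cons_succ]

def GJ (lo hi : ℕ) (S : List ℕ) (a : ℕ) : List ℕ :=
  if lo < S.getD (a + 1) 0 ∧ S.getD (a + 1) 0 < hi
  then [(S.filter (fun y => decide (lo < y ∧ y < S.getD (a + 1) 0))).length] else []

lemma psiJ_eq (n : ℕ) (i : List ℕ) (lo hi : ℕ) :
    psiJ n i lo hi = recG (GJ lo hi) (List.range (n + 1)) i := by
  rw [psiJ, filter_map_eq_flatMap, ← flatMap_range_proc]
  apply List.flatMap_congr
  intro r _
  simp only [GJ, elemRemoved, restAfter_eq, decide_eq_true_eq]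
  split_ifs <;> simp_all

/-! ### Structured states -/

def OKst (x m y : ℕ) (A B : List ℕ) : Prop :=
  (∀ e ∈ A, x < e ∧ e < m) ∧ (∀ e ∈ B, m < e ∧ e < y) ∧
    A.Pairwise (· < ·) ∧ B.Pairwise (· < ·) ∧ x < m ∧ m < y

lemma OKst_erase_left {x m y : ℕ} {A B : List ℕ} (h : OKst x m y A B) (a : ℕ) :
    OKst x m y (A.eraseIdx a) B :=
  ⟨fun e he => h.1 e ((A.eraseIdx_sublist a).subset he), h.2.1,
    h.2.2.1.sublist (A.eraseIdx_sublist a), h.2.2.2⟩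

lemma OKst_erase_right {x m y : ℕ} {A B : List ℕ} (h : OKst x m y A B) (b : ℕ) :
    OKst x m y A (B.eraseIdx b) :=
  ⟨h.1, fun e he => h.2.1 e ((B.eraseIdx_sublist b).subset he), h.2.2.1,
    h.2.2.2.1.sublist (B.eraseIdx_sublist b), h.2.2.2.2⟩

lemma pstep_left (x m y a : ℕ) (A B : List ℕ) (ha : a < A.length) :
    pstep (x :: (A ++ m :: B) ++ [y]) a = x :: (A.eraseIdx a ++ m :: B) ++ [y] := by
  show (x :: ((A ++ m :: B) ++ [y])).eraseIdx (a + 1) = _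
  rw [List.eraseIdx_cons_succ,
    List.eraseIdx_append_of_lt_length (by simp; omega) [y],
    List.eraseIdx_append_of_lt_length ha (m :: B)]
  simp

lemma getD_left (x m y a : ℕ) (A B : List ℕ) (ha : a < A.length) :
    (x :: (A ++ m :: B) ++ [y]).getD (a + 1) 0 = A.getD a 0 := by
  have h1 : a + 1 < (x :: (A ++ m :: B) ++ [y]).length := by simp; omega
  rw [List.getD_eq_getElem _ _ h1, List.getD_eq_getElem _ _ ha]
  show (x :: ((A ++ m :: B) ++ [y]))[a+1] = _
  rw [List.getElem_cons_succ]
  rw [List.getElem_append_left (by simp; omega)]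
  rw [List.getElem_append_left ha]

lemma pstep_right (x m y b : ℕ) (A B : List ℕ) (hb : b < B.length) :
    pstep (x :: (A ++ m :: B) ++ [y]) (A.length + 1 + b) =
      x :: (A ++ m :: B.eraseIdx b) ++ [y] := by
  show (x :: ((A ++ m :: B) ++ [y])).eraseIdx (A.length + 1 + b + 1) = _
  rw [List.eraseIdx_cons_succ,
    List.eraseIdx_append_of_lt_length (by simp; omega) [y],
    List.eraseIdx_append_of_length_le (by omega) (m :: B)]
  have : A.length + 1 + b - A.length = b + 1 := by omega
  rw [this, List.eraseIdx_cons_succ]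
  simp

lemma getD_right (x m y b : ℕ) (A B : List ℕ) (hb : b < B.length) :
    (x :: (A ++ m :: B) ++ [y]).getD (A.length + 1 + b + 1) 0 = B.getD b 0 := by
  have h1 : A.length + 1 + b + 1 < (x :: (A ++ m :: B) ++ [y]).length := by simp; omega
  rw [List.getD_eq_getElem _ _ h1, List.getD_eq_getElem _ _ hb]
  show (x :: ((A ++ m :: B) ++ [y]))[A.length + 1 + b + 1] = _
  rw [List.getElem_cons_succ]
  rw [List.getElem_append_left (h' := by simp; omega) (by simp; omega)]
  rw [List.getElem_append_right (by omega)]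
  have : A.length + 1 + b - A.length = b + 1 := by omega
  simp [this]

lemma getD_mem {A : List ℕ} {a : ℕ} (ha : a < A.length) : A.getD a 0 ∈ A := by
  rw [List.getD_eq_getElem _ _ ha]; exact List.getElem_mem _

lemma count_lt_sorted : ∀ (A : List ℕ) (a : ℕ), A.Pairwise (· < ·) → a < A.length →
    (A.filter (fun z => decide (z < A.getD a 0))).length = a
  | [], a, _, h => absurd h (by simp)
  | h :: T, 0, hp, _ => by
    simp only [List.getD_cons_zero, List.filter_cons, decide_eq_true_eq]
    rw [if_neg (by omega)]
    have : T.filter (fun z => decide (z < h)) = [] := by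
      rw [List.filter_eq_nil_iff]
      intro e he
      have := (List.pairwise_cons.1 hp).1 e he
      simp; omega
    simp [this]
  | h :: T, a + 1, hp, hlen => by
    simp only [List.getD_cons_succ, List.filter_cons, decide_eq_true_eq]
    have hm : T.getD a 0 ∈ T := getD_mem (by simpa using Nat.lt_of_succ_lt_succ hlen)
    rw [if_pos ((List.pairwise_cons.1 hp).1 _ hm)]
    simp only [List.length_cons]
    rw [count_lt_sorted T a (List.pairwise_cons.1 hp).2 (by simpa using Nat.lt_of_succ_lt_succ hlen)]

lemma count_state_left (x m y : ℕ) (A B : List ℕ) (hOK : OKst x m y A B)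
    (a : ℕ) (ha : a < A.length) :
    ((x :: (A ++ m :: B) ++ [y]).filter
      (fun z => decide (x < z ∧ z < A.getD a 0))).length = a := by
  obtain ⟨hA, hB, hpA, hpB, hxm, hmy⟩ := hOK
  have heA : A.getD a 0 ∈ A := getD_mem ha
  have hxe : x < A.getD a 0 := (hA _ heA).1
  have hem : A.getD a 0 < m := (hA _ heA).2
  show ((x :: ((A ++ m :: B) ++ [y])).filter _).length = a
  rw [List.filter_cons_of_neg (by simp), List.filter_append, List.filter_append,
    List.filter_cons_of_neg (by simp only [decide_eq_true_eq, not_and, not_lt]; omega)]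
  have h1 : B.filter (fun z => decide (x < z ∧ z < A.getD a 0)) = [] := by
    rw [List.filter_eq_nil_iff]; intro e he
    have := hB e he
    simp only [decide_eq_true_eq, not_and, not_lt]; omega
  have h2 : [y].filter (fun z => decide (x < z ∧ z < A.getD a 0)) = [] := by
    rw [List.filter_eq_nil_iff]; intro e he
    simp only [List.mem_singleton] at he; subst he
    simp only [decide_eq_true_eq, not_and, not_lt]; omega
  have h3 : A.filter (fun z => decide (x < z ∧ z < A.getD a 0)) =
      A.filter (fun z => decide (z < A.getD a 0)) := by
    apply List.filter_congr
    intro e he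
    have := hA e he
    rw [decide_eq_decide]
    omega
  rw [h1, h2, h3]
  simpa using count_lt_sorted A a hpA ha

lemma count_state_right (x m y : ℕ) (A B : List ℕ) (hOK : OKst x m y A B)
    (b : ℕ) (hb : b < B.length) :
    ((x :: (A ++ m :: B) ++ [y]).filter
      (fun z => decide (m < z ∧ z < B.getD b 0))).length = b := by
  obtain ⟨hA, hB, hpA, hpB, hxm, hmy⟩ := hOK
  have heB : B.getD b 0 ∈ B := getD_mem hb
  have hme : m < B.getD b 0 := (hB _ heB).1
  have hey : B.getD b 0 < y := (hB _ heB).2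
  show ((x :: ((A ++ m :: B) ++ [y])).filter _).length = b
  rw [List.filter_cons_of_neg (by simp only [decide_eq_true_eq, not_and, not_lt]; omega),
    List.filter_append, List.filter_append,
    List.filter_cons_of_neg (by simp)]
  have h1 : A.filter (fun z => decide (m < z ∧ z < B.getD b 0)) = [] := by
    rw [List.filter_eq_nil_iff]; intro e he
    have := hA e he
    simp only [decide_eq_true_eq, not_and, not_lt]; omega
  have h2 : [y].filter (fun z => decide (m < z ∧ z < B.getD b 0)) = [] := by
    rw [List.filter_eq_nil_iff]; intro e he
    simp only [List.mem_singleton] at he; subst he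
    simp only [decide_eq_true_eq, not_and, not_lt]; omega
  have h3 : B.filter (fun z => decide (m < z ∧ z < B.getD b 0)) =
      B.filter (fun z => decide (z < B.getD b 0)) := by
    apply List.filter_congr
    intro e he
    have := hB e he
    rw [decide_eq_decide]
    omega
  rw [h1, h2, h3]
  simpa using count_lt_sorted B b hpB hb

lemma DYN : ∀ (i A B : List ℕ) (x m y : ℕ),
    Compat A.length B.length i → OKst x m y A B →
    (i.length = A.length + B.length → pproc (x :: (A ++ m :: B) ++ [y]) i = [x, m, y]) ∧
    recG (GJ x m) (x :: (A ++ m :: B) ++ [y]) i = exJ1 A.length i ∧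
    recG (GJ m y) (x :: (A ++ m :: B) ++ [y]) i = exJ2 A.length i ∧
    (∀ r < i.length,
      x < eRem (x :: (A ++ m :: B) ++ [y]) i r ∧
      eRem (x :: (A ++ m :: B) ++ [y]) i r < y ∧
      eRem (x :: (A ++ m :: B) ++ [y]) i r ≠ m ∧
      ((x < eRem (x :: (A ++ m :: B) ++ [y]) i r ∧
          eRem (x :: (A ++ m :: B) ++ [y]) i r < m) ↔
        (exS A.length i).getD r false = true))
  | [], A, B, x, m, y, _, hOK => by
    refine ⟨?_, rfl, rfl, by simp⟩
    intro hl
    simp only [List.length_nil] at hl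
    obtain ⟨hA, hB⟩ : A = [] ∧ B = [] := by
      constructor <;> apply List.eq_nil_of_length_eq_zero <;> omega
    subst hA; subst hB
    rfl
  | a :: i, A, B, x, m, y, hcomp, hOK => by
    rcases hcomp with ⟨ha, hc⟩ | ⟨b, hb, rfl, hc⟩
    · -- removal below the survivor
      have hstep : pstep (x :: (A ++ m :: B) ++ [y]) a =
          x :: (A.eraseIdx a ++ m :: B) ++ [y] := pstep_left x m y a A B ha
      have hlenA : (A.eraseIdx a).length = A.length - 1 := by
        rw [List.length_eraseIdx, if_pos ha]
      have hOK' := OKst_erase_left hOK a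
      have hc' : Compat (A.eraseIdx a).length B.length i := by rw [hlenA]; exact hc
      obtain ⟨D1, D2, D3, D4⟩ := DYN i (A.eraseIdx a) B x m y hc' hOK'
      have he : (x :: (A ++ m :: B) ++ [y]).getD (a + 1) 0 = A.getD a 0 :=
        getD_left x m y a A B ha
      have heA : A.getD a 0 ∈ A := getD_mem ha
      have hxe : x < A.getD a 0 := (hOK.1 _ heA).1
      have hem : A.getD a 0 < m := (hOK.1 _ heA).2
      have hmy : m < y := hOK.2.2.2.2.2
      refine ⟨?_, ?_, ?_, ?_⟩
      · intro hl
        simp only [List.length_cons] at hl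
        rw [pproc_cons, hstep]
        apply D1
        rw [hlenA]; omega
      · rw [recG, hstep, D2, GJ, he, if_pos ⟨hxe, hem⟩]
        have hcount := count_state_left x m y A B hOK a ha
        simp only [exJ1, if_pos ha, ← hlenA]
        congr 1
        · simpa [he] using congrArg (fun z => [z]) hcount
      · rw [recG, hstep, D3, GJ, he, if_neg (by omega)]
        simp only [exJ2, if_pos ha, ← hlenA, List.nil_append]
      · intro r hr
        match r with
        | 0 =>
          rw [eRem_zero _ a i, he]
          simp only [exS, if_pos ha, List.getD_cons_zero]
          exact ⟨hxe, by omega, by omega, iff_of_true ⟨hxe, hem⟩ trivial⟩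
        | r + 1 =>
          rw [eRem_succ, hstep]
          simp only [exS, if_pos ha, List.getD_cons_succ, ← hlenA]
          exact D4 r (by simpa using Nat.lt_of_succ_lt_succ hr)
    · -- removal above the survivor
      have hna : ¬ (A.length + 1 + b < A.length) := by omega
      have hstep : pstep (x :: (A ++ m :: B) ++ [y]) (A.length + 1 + b) =
          x :: (A ++ m :: B.eraseIdx b) ++ [y] := pstep_right x m y b A B hb
      have hlenB : (B.eraseIdx b).length = B.length - 1 := by
        rw [List.length_eraseIdx, if_pos hb]
      have hOK' := OKst_erase_right hOK b
      have hc' : Compat A.length (B.eraseIdx b).length i := by rw [hlenB]; exact hc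
      obtain ⟨D1, D2, D3, D4⟩ := DYN i A (B.eraseIdx b) x m y hc' hOK'
      have he : (x :: (A ++ m :: B) ++ [y]).getD (A.length + 1 + b + 1) 0 = B.getD b 0 :=
        getD_right x m y b A B hb
      have heB : B.getD b 0 ∈ B := getD_mem hb
      have hme : m < B.getD b 0 := (hOK.2.1 _ heB).1
      have hey : B.getD b 0 < y := (hOK.2.1 _ heB).2
      have hxm : x < m := hOK.2.2.2.2.1
      refine ⟨?_, ?_, ?_, ?_⟩
      · intro hl
        simp only [List.length_cons] at hl
        rw [pproc_cons, hstep]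
        apply D1
        rw [hlenB]; omega
      · rw [recG, hstep, D2, GJ, he, if_neg (by omega)]
        simp only [exJ1, if_neg hna, List.nil_append]
      · rw [recG, hstep, D3, GJ, he, if_pos ⟨hme, hey⟩]
        have hcount := count_state_right x m y A B hOK b hb
        have hsub : A.length + 1 + b - A.length - 1 = b := by omega
        simp only [exJ2, if_neg hna, hsub]
        congr 1
        · simpa [he] using congrArg (fun z => [z]) hcount
      · intro r hr
        match r with
        | 0 =>
          rw [eRem_zero _ (A.length + 1 + b) i, he]
          simp only [exS, if_neg hna, List.getD_cons_zero]
          refine ⟨by omega, hey, by omega, iff_of_false (by omega) (by simp)⟩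
        | r + 1 =>
          rw [eRem_succ, hstep]
          simp only [exS, if_neg hna, List.getD_cons_succ]
          exact D4 r (by simpa using Nat.lt_of_succ_lt_succ hr)

/-! ### Instantiation at the standard state -/

lemma range'_append_1 (s m k : ℕ) :
    List.range' s m ++ List.range' (s + m) k = List.range' s (k + m) := by
  rw [Nat.add_comm k m]; exact List.range'_append_1

lemma range_decomp (n c : ℕ) (hn : 2 ≤ n) (hc : c ≤ n - 2) :
    List.range (n + 1) =
      0 :: (List.range' 1 c ++ (c + 1) :: List.range' (c + 2) (n - 2 - c)) ++ [n] := by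
  have s1 := range'_append_1 (c + 2) (n - 2 - c) 1
  rw [show c + 2 + (n - 2 - c) = n by omega] at s1
  have s2 := range'_append_1 (c + 1) 1 (1 + (n - 2 - c))
  rw [show c + 1 + 1 = c + 2 from rfl] at s2
  have s3 := range'_append_1 1 c (1 + (n - 2 - c) + 1)
  rw [show 1 + c = c + 1 by omega] at s3
  have s4 := range'_append_1 0 1 (1 + (n - 2 - c) + 1 + c)
  rw [show (0 : ℕ) + 1 = 1 from rfl] at s4
  rw [List.range_eq_range', show n + 1 = 1 + (n - 2 - c) + 1 + c + 1 by omega, ← s4, ← s3,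
    ← s2, List.range'_one, ← s1, List.range'_one]
  simp

lemma master3 (n : ℕ) (hn : 2 ≤ n) (i : List ℕ) (hlen : i.length = n - 2) (c : ℕ)
    (hc : c ≤ n - 2) (hc1 : c + 1 < n) (hcomp : Compat c (n - 2 - c) i) :
    restList n i = [0, c + 1, n] ∧
    psiJ n i 0 (c + 1) = exJ1 c i ∧
    psiJ n i (c + 1) n = exJ2 c i ∧
    (∀ r < i.length,
      0 < elemRemoved n i r ∧ elemRemoved n i r < n ∧ elemRemoved n i r ≠ c + 1 ∧
      ((0 < elemRemoved n i r ∧ elemRemoved n i r < c + 1) ↔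
        (exS c i).getD r false = true)) := by
  set A := List.range' 1 c with hA
  set B := List.range' (c + 2) (n - 2 - c) with hB
  have hAlen : A.length = c := by simp [hA]
  have hBlen : B.length = n - 2 - c := by simp [hB]
  have hrange : List.range (n + 1) = 0 :: (A ++ (c + 1) :: B) ++ [n] :=
    range_decomp n c hn hc
  have hOK : OKst 0 (c + 1) n A B := by
    refine ⟨?_, ?_, List.pairwise_lt_range' (s := 1) (n := c), List.pairwise_lt_range' (s := c + 2) (n := n - 2 - c), ?_, ?_⟩
    · intro e he
      rw [hA, List.mem_range'_1] at he
      omega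
    · intro e he
      rw [hB, List.mem_range'_1] at he
      omega
    · omega
    · omega
  have hcomp' : Compat A.length B.length i := by rw [hAlen, hBlen]; exact hcomp
  obtain ⟨D1, D2, D3, D4⟩ := DYN i A B 0 (c + 1) n hcomp' hOK
  refine ⟨?_, ?_, ?_, ?_⟩
  · rw [restList_eq, hrange]
    apply D1
    rw [hAlen, hBlen]
    omega
  · rw [psiJ_eq, hrange, D2, hAlen]
  · rw [psiJ_eq, hrange, D3, hAlen]
  · intro r hr
    have := D4 r hr
    rw [elemRemoved_eq, hrange]
    rw [hAlen] at this
    exact this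

lemma master2 (n : ℕ) (hn : 2 ≤ n) (i : List ℕ) (hi : memS (n - 1) (n - 2) i) :
    ∃ c, c ≤ n - 2 ∧ c + 1 < n ∧ Compat c (n - 2 - c) i := by
  obtain ⟨hlen, hbd⟩ := hi
  obtain ⟨c, hcn, hcomp⟩ := PRE i (n - 1) (by omega) (fun r hr => by
    have := hbd r (by omega)
    omega)
  refine ⟨c, by omega, by omega, ?_⟩
  rw [show n - 2 - c = n - 1 - 1 - c by omega]
  exact hcomp

/-! ### psiAlpha membership and cardinality -/

lemma mem_psiAlpha {n : ℕ} {i : List ℕ} {lo hi r : ℕ} :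
    r ∈ psiAlpha n i lo hi ↔
      r < i.length ∧ lo < elemRemoved n i r ∧ elemRemoved n i r < hi := by
  simp [psiAlpha, Finset.mem_filter, Finset.mem_range, and_assoc]

lemma card_filter_range (N : ℕ) (p : ℕ → Prop) [DecidablePred p] :
    ((Finset.range N).filter p).card =
      ((List.range N).filter (fun r => decide (p r))).length := by
  rw [Finset.card_def, Finset.filter_val, Finset.range_val]
  show Multiset.card (Multiset.filter p ↑(List.range N)) = _
  rw [Multiset.filter_coe, Multiset.coe_card]

lemma psiJ_length (n : ℕ) (i : List ℕ) (lo hi : ℕ) :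
    (psiJ n i lo hi).length = (psiAlpha n i lo hi).card := by
  rw [psiJ, List.length_map, psiAlpha, card_filter_range]

/-! ### The full package -/

lemma PKG2 (n : ℕ) (hn : 2 ≤ n) (i : List ℕ) (hlen : i.length = n - 2) (c : ℕ)
    (hc : c ≤ n - 2) (hc1 : c + 1 < n) (hcomp : Compat c (n - 2 - c) i) :
    restList n i = [0, c + 1, n] ∧
    IsShuffleF (fun s : Fin 2 => if (s : Fin 2).1 = 0 then c else n - c - 2)
      (fun s : Fin 2 => psiAlpha n i (if (s : Fin 2).1 = 0 then 0 else c + 1)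
        (if (s : Fin 2).1 = 0 then c + 1 else n)) ∧
    memS c c (psiJ n i 0 (c + 1)) ∧
    memS (n - c - 2) (n - c - 2) (psiJ n i (c + 1) n) ∧
    build c ((List.range (n - 2)).map (fun r => decide (r ∈ psiAlpha n i 0 (c + 1))))
      (psiJ n i 0 (c + 1)) (psiJ n i (c + 1) n) = i := by
  obtain ⟨hrest, hj1, hj2, hcls⟩ := master3 n hn i hlen c hc hc1 hcomp
  have hnc : n - 2 - c = n - c - 2 := by omega
  obtain ⟨hm1, hm2, hct, hcf⟩ := EX i c (n - 2 - c) hcomp (by omega)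
  rw [hnc] at hm2
  have hmem1 : memS c c (psiJ n i 0 (c + 1)) := by rw [hj1]; exact hm1
  have hmem2 : memS (n - c - 2) (n - c - 2) (psiJ n i (c + 1) n) := by
    rw [hj2]; exact hm2
  -- the sigma characterization of α₀
  have hsigma : ∀ r < i.length,
      (r ∈ psiAlpha n i 0 (c + 1) ↔ (exS c i).getD r false = true) := by
    intro r hr
    rw [mem_psiAlpha]
    obtain ⟨g1, g2, g3, g4⟩ := hcls r hr
    constructor
    · intro h
      exact g4.mp h.2
    · intro h
      exact ⟨hr, g4.mpr h⟩
  have hsigma2 : ∀ r < i.length,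
      (r ∈ psiAlpha n i (c + 1) n ↔ ¬ (exS c i).getD r false = true) := by
    intro r hr
    rw [mem_psiAlpha]
    obtain ⟨h1, h2, h3, h4⟩ := hcls r hr
    constructor
    · intro h hs
      have := h4.mpr hs
      omega
    · intro hs
      refine ⟨hr, ?_, h2⟩
      by_contra hcon
      exact hs (h4.mp ⟨h1, by omega⟩)
  -- cardinalities
  have hcard1 : (psiAlpha n i 0 (c + 1)).card = c := by
    rw [← psiJ_length, hj1]
    exact hm1.1
  have hcard2 : (psiAlpha n i (c + 1) n).card = n - c - 2 := by
    rw [← psiJ_length, hj2]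
    exact hm2.1
  refine ⟨hrest, ⟨?_, ?_, ?_⟩, hmem1, hmem2, ?_⟩
  · intro s
    fin_cases s
    · simpa using hcard1
    · simpa using hcard2
  · intro s t hst
    have hd : Disjoint (psiAlpha n i 0 (c + 1)) (psiAlpha n i (c + 1) n) := by
      rw [Finset.disjoint_left]
      intro r h0 h1
      rw [mem_psiAlpha] at h0 h1
      omega
    fin_cases s <;> fin_cases t <;> simp_all <;> exact hd.symm
  · have hsum : (∑ s : Fin 2, if (s : Fin 2).1 = 0 then c else n - c - 2) = n - 2 := by
      rw [Fin.sum_univ_two]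
      simp
      omega
    rw [hsum]
    ext r
    simp only [Finset.mem_biUnion, Finset.mem_univ, true_and, Finset.mem_range]
    constructor
    · rintro ⟨s, hs⟩
      fin_cases s <;> simp at hs <;> rw [mem_psiAlpha] at hs <;> omega
    · intro hr
      have hr' : r < i.length := by omega
      obtain ⟨h1, h2, h3, h4⟩ := hcls r hr'
      by_cases hcase : elemRemoved n i r < c + 1
      · exact ⟨0, by simpa [mem_psiAlpha] using ⟨hr', h1, by omega⟩⟩
      · exact ⟨1, by simpa [mem_psiAlpha] using ⟨hr', by omega, h2⟩⟩
  · -- the reconstruction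
    have hS : (List.range (n - 2)).map (fun r => decide (r ∈ psiAlpha n i 0 (c + 1))) =
        exS c i := by
      apply List.ext_getElem
      · simp [exS_length, hlen]
      · intro r h1 h2
        simp only [List.getElem_map, List.getElem_range]
        rw [Bool.eq_iff_iff, decide_eq_true_eq]
        have hr : r < i.length := by simp at h1; omega
        rw [← List.getD_eq_getElem _ false (by rwa [exS_length])]
        exact hsigma r hr
    rw [hS, hj1, hj2]
    exact roundtrip1 i c (n - 2 - c) hcomp

lemma count_true_map (l : List ℕ) (p : ℕ → Bool) :
    (l.map p).count true = (l.filter p).length := by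
  induction l with
  | nil => rfl
  | cons a l ih =>
    rcases h : p a with _ | _ <;> simp [List.count_cons, h, ih, List.filter_cons]

lemma count_bool_total (l : List Bool) : l.count true + l.count false = l.length := by
  induction l with
  | nil => rfl
  | cons a l ih => cases a <;> simp [List.count_cons] <;> omega

lemma key_lemma (n : ℕ) (hn : 2 ≤ n) (i : List ℕ) (hi : memS (n - 1) (n - 2) i) :
    (0 < (restList n i).getD 1 0 ∧ (restList n i).getD 1 0 < n) ∧
    IsShuffleF (fun s : Fin 2 => if (s : Fin 2).1 = 0 then (restList n i).getD 1 0 - 1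
        else n - (restList n i).getD 1 0 - 1)
      (fun s : Fin 2 => psiAlpha n i (if (s : Fin 2).1 = 0 then 0 else (restList n i).getD 1 0)
        (if (s : Fin 2).1 = 0 then (restList n i).getD 1 0 else n)) ∧
    memS ((restList n i).getD 1 0 - 1) ((restList n i).getD 1 0 - 1)
      (psiJ n i 0 ((restList n i).getD 1 0)) ∧
    memS (n - (restList n i).getD 1 0 - 1) (n - (restList n i).getD 1 0 - 1)
      (psiJ n i ((restList n i).getD 1 0) n) ∧
    restList n i = [0, (restList n i).getD 1 0, n] ∧
    build ((restList n i).getD 1 0 - 1)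
      ((List.range (n - 2)).map fun r => decide (r ∈ psiAlpha n i 0 ((restList n i).getD 1 0)))
      (psiJ n i 0 ((restList n i).getD 1 0)) (psiJ n i ((restList n i).getD 1 0) n) = i := by
  obtain ⟨c, hc, hc1, hcomp⟩ := master2 n hn i hi
  obtain ⟨hrest, hshuf, hm1, hm2, hrec⟩ := PKG2 n hn i hi.1 c hc hc1 hcomp
  have hp : (restList n i).getD 1 0 = c + 1 := by rw [hrest]; rfl
  rw [hp]
  simp only [Nat.add_sub_cancel, show n - (c + 1) - 1 = n - c - 2 from by omega]
  exact ⟨⟨Nat.succ_pos c, hc1⟩, hshuf, hm1, hm2, hrest, hrec⟩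

/-- For `n ≥ 2` the set `S_{n-1,n-2}` is the disjoint union over
`0 < p_1 < n` of the subsets `S_{n-1}((0, p_1, n))`; the maps `Ψ_{(0,p_1,n)}`
combine to a bijection
`S_{n-1,n-2} ≅ ⨆_{q_1+q_2=n} Shuff(q_1-1, q_2-1) × S_{q_1-1} × S_{q_2-1}`;
and appending a final entry `0` is a bijection `S_{n-1,n-2} → S_{n-1}`. -/
theorem szczarba_psi_combined (n : ℕ) (hn : 2 ≤ n) :
    (∀ i : List ℕ, memS (n - 1) (n - 2) i →
      ∃! p1 : ℕ, 0 < p1 ∧ p1 < n ∧ restList n i = [0, p1, n]) ∧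
    (∃ Ψ : {i : List ℕ // memS (n - 1) (n - 2) i} →
        Σ q1 : {q1 : ℕ // 0 < q1 ∧ q1 < n},
          {α : Fin 2 → Finset ℕ //
              IsShuffleF (fun s : Fin 2 => if s.1 = 0 then q1.1 - 1 else n - q1.1 - 1) α} ×
            {j : List ℕ // memS (q1.1 - 1) (q1.1 - 1) j} ×
            {j : List ℕ // memS (n - q1.1 - 1) (n - q1.1 - 1) j},
      Function.Bijective Ψ ∧
      ∀ i, restList n i.1 = [0, (Ψ i).1.1, n] ∧
        ((Ψ i).2.1.1 = fun s : Fin 2 =>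
          psiAlpha n i.1 (if s.1 = 0 then 0 else (Ψ i).1.1)
            (if s.1 = 0 then (Ψ i).1.1 else n)) ∧
        (Ψ i).2.2.1.1 = psiJ n i.1 0 (Ψ i).1.1 ∧
        (Ψ i).2.2.2.1 = psiJ n i.1 (Ψ i).1.1 n) ∧
    ((∀ i : List ℕ, memS (n - 1) (n - 2) i → memS (n - 1) (n - 1) (i ++ [0])) ∧
      Set.BijOn (fun i => i ++ [0])
        {i : List ℕ | memS (n - 1) (n - 2) i} {i : List ℕ | memS (n - 1) (n - 1) i}) := by
  classical
  -- Part 1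
  have part1 : ∀ i : List ℕ, memS (n - 1) (n - 2) i →
      ∃! p1 : ℕ, 0 < p1 ∧ p1 < n ∧ restList n i = [0, p1, n] := by
    intro i hi
    obtain ⟨c, hc, hc1, hcomp⟩ := master2 n hn i hi
    obtain ⟨hrest, -⟩ := PKG2 n hn i hi.1 c hc hc1 hcomp
    refine ⟨c + 1, ⟨Nat.succ_pos c, hc1, hrest⟩, ?_⟩
    rintro p ⟨-, -, hp⟩
    rw [hrest] at hp
    simpa using hp.symm
  -- Part 3
  have hmap : ∀ i : List ℕ, memS (n - 1) (n - 2) i → memS (n - 1) (n - 1) (i ++ [0]) := by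
    rintro i ⟨hl, hb⟩
    refine ⟨by simp [hl]; omega, ?_⟩
    intro t ht
    by_cases htl : t < n - 2
    · rw [List.getD_append _ _ _ t (by omega)]
      have := hb t htl
      omega
    · have ht2 : t = n - 2 := by omega
      subst ht2
      rw [List.getD_append_right _ _ _ _ (by omega)]
      rw [hl, Nat.sub_self, List.getD_cons_zero]
      omega
  have part3 : Set.BijOn (fun i : List ℕ => i ++ [0])
      {i : List ℕ | memS (n - 1) (n - 2) i} {i : List ℕ | memS (n - 1) (n - 1) i} := by
    refine ⟨fun i hi => hmap i hi, fun a _ b _ h => List.append_cancel_right h, ?_⟩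
    intro j hj
    simp only [Set.mem_setOf_eq] at hj
    obtain ⟨hl, hb⟩ := hj
    have hne : j ≠ [] := by
      intro hcon
      rw [hcon] at hl
      simp at hl
      omega
    have hlast : j.getLast hne = 0 := by
      have hidx : j.length - 1 < j.length := by omega
      have h1 : j.getD (j.length - 1) 0 = j.getLast hne := by
        rw [List.getD_eq_getElem _ _ hidx, List.getLast_eq_getElem]
      have h2 := hb (j.length - 1) (by omega)
      omega
    refine ⟨j.dropLast, ?_, ?_⟩
    · refine ⟨by simp [hl]; omega, ?_⟩
      intro t ht
      have htj : t < j.dropLast.length := by simp [hl]; omega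
      rw [List.getD_eq_getElem _ _ htj, List.getElem_dropLast]
      have := hb t (by omega)
      rw [List.getD_eq_getElem _ _ (by omega)] at this
      omega
    · show j.dropLast ++ [0] = j
      rw [← hlast]
      exact List.dropLast_append_getLast hne
  refine ⟨part1, ?_, hmap, part3⟩
  -- Part 2
  refine ⟨fun ip => ⟨⟨(restList n ip.1).getD 1 0, (key_lemma n hn ip.1 ip.2).1⟩,
    ⟨fun s : Fin 2 => psiAlpha n ip.1 (if (s : Fin 2).1 = 0 then 0 else (restList n ip.1).getD 1 0)
        (if (s : Fin 2).1 = 0 then (restList n ip.1).getD 1 0 else n),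
      (key_lemma n hn ip.1 ip.2).2.1⟩,
    ⟨psiJ n ip.1 0 ((restList n ip.1).getD 1 0), (key_lemma n hn ip.1 ip.2).2.2.1⟩,
    ⟨psiJ n ip.1 ((restList n ip.1).getD 1 0) n, (key_lemma n hn ip.1 ip.2).2.2.2.1⟩⟩,
    ⟨?_, ?_⟩, ?_⟩
  · -- injective
    intro a b h
    have h1 : (restList n a.1).getD 1 0 = (restList n b.1).getD 1 0 := by
      have := congrArg (fun z => z.1.1) h
      simpa using this
    have h2 : psiAlpha n a.1 0 ((restList n a.1).getD 1 0) =
        psiAlpha n b.1 0 ((restList n b.1).getD 1 0) := by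
      have := congrArg (fun z => z.2.1.1) h
      simp only at this
      have h2' := congrFun this 0
      simpa using h2'
    have h3 : psiJ n a.1 0 ((restList n a.1).getD 1 0) =
        psiJ n b.1 0 ((restList n b.1).getD 1 0) := by
      have := congrArg (fun z => z.2.2.1.1) h
      simpa using this
    have h4 : psiJ n a.1 ((restList n a.1).getD 1 0) n =
        psiJ n b.1 ((restList n b.1).getD 1 0) n := by
      have := congrArg (fun z => z.2.2.2.1) h
      simpa using this
    apply Subtype.ext
    rw [← (key_lemma n hn a.1 a.2).2.2.2.2.2, ← (key_lemma n hn b.1 b.2).2.2.2.2.2]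
    rw [h2, h3, h4, h1]
  · -- surjective
    rintro ⟨⟨q1, hq0, hqn⟩, ⟨α, hα⟩, ⟨j1, hj1⟩, ⟨j2, hj2⟩⟩
    obtain ⟨hcard, hdisj, hunion⟩ := hα
    have hsum : (∑ s : Fin 2, if (s : Fin 2).1 = 0 then q1 - 1 else n - q1 - 1) = n - 2 := by
      rw [Fin.sum_univ_two]
      simp
      omega
    rw [hsum] at hunion
    have hsub0 : α 0 ⊆ Finset.range (n - 2) := by
      rw [← hunion]
      intro r hr
      exact Finset.mem_biUnion.2 ⟨0, Finset.mem_univ _, hr⟩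
    have hsub1 : α 1 ⊆ Finset.range (n - 2) := by
      rw [← hunion]
      intro r hr
      exact Finset.mem_biUnion.2 ⟨1, Finset.mem_univ _, hr⟩
    have hcard0 : (α 0).card = q1 - 1 := by simpa using hcard 0
    have hcard1 : (α 1).card = n - q1 - 1 := by simpa using hcard 1
    set σ := (List.range (n - 2)).map (fun r => decide (r ∈ α 0)) with hσ
    have hσlen : σ.length = n - 2 := by simp [hσ]
    have hfilt : ((List.range (n - 2)).filter (fun r => decide (r ∈ α 0))).length = q1 - 1 := by
      rw [← card_filter_range]
      rw [show (Finset.range (n - 2)).filter (fun r => r ∈ α 0) = α 0 by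
        ext x
        simp only [Finset.mem_filter, Finset.mem_range, and_iff_right_iff_imp]
        intro hx
        simpa using hsub0 hx]
      exact hcard0
    have hct : σ.count true = q1 - 1 := by rw [hσ, count_true_map, hfilt]
    have hcf : σ.count false = n - q1 - 1 := by
      have := count_bool_total σ
      omega
    have hBOK := BOK_of σ (q1 - 1) (n - q1 - 1) j1 j2 hct hcf hj1 hj2
    obtain ⟨hcomp, hexs, hexj1, hexj2, hblen⟩ := BOK_build σ (q1 - 1) (n - q1 - 1) j1 j2 hBOK
    set i := build (q1 - 1) σ j1 j2 with hi
    clear_value i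
    have hilen : i.length = n - 2 := by rw [hblen, hσlen]
    have hcomp' : Compat (q1 - 1) (n - 2 - (q1 - 1)) i := by
      rw [show n - 2 - (q1 - 1) = n - q1 - 1 by omega]
      exact hcomp
    have himem : memS (n - 1) (n - 2) i := by
      refine ⟨hilen, ?_⟩
      intro t ht
      have := CVALID i (q1 - 1) (n - q1 - 1) hcomp t (by omega)
      omega
    obtain ⟨hrest, hj1e, hj2e, hcls⟩ :=
      master3 n hn i hilen (q1 - 1) (by omega) (by omega) hcomp'
    have hq : q1 - 1 + 1 = q1 := by omega
    rw [hq] at hrest hj1e hj2e hcls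
    have hgetD : (restList n i).getD 1 0 = q1 := by rw [hrest]; rfl
    -- characterize α
    have hα0 : psiAlpha n i 0 q1 = α 0 := by
      ext r
      rw [mem_psiAlpha]
      constructor
      · rintro ⟨hr, he⟩
        have hiff := (hcls r hr).2.2.2
        have hs := hiff.mp he
        rw [hexs] at hs
        rw [List.getD_eq_getElem _ _ (by rwa [hσlen, ← hilen])] at hs
        simpa [hσ] using hs
      · intro hr0
        have hrlt : r < n - 2 := by simpa using hsub0 hr0
        have hr : r < i.length := by omega
        have hiff := (hcls r hr).2.2.2
        refine ⟨hr, hiff.mpr ?_⟩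
        rw [hexs, List.getD_eq_getElem _ _ (by rwa [hσlen, ← hilen])]
        simpa [hσ] using hr0
    have hα1 : psiAlpha n i q1 n = α 1 := by
      ext r
      rw [mem_psiAlpha]
      constructor
      · rintro ⟨hr, he1, he2⟩
        have hrlt : r < n - 2 := by omega
        have hnot0 : r ∉ α 0 := by
          rw [← hα0, mem_psiAlpha]
          rintro ⟨-, -, hcon⟩
          omega
        have hrin : r ∈ Finset.range (n - 2) := Finset.mem_range.2 hrlt
        rw [← hunion] at hrin
        obtain ⟨s, -, hs⟩ := Finset.mem_biUnion.1 hrin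
        fin_cases s
        · exact absurd hs hnot0
        · exact hs
      · intro hr1
        have hrlt : r < n - 2 := by simpa using hsub1 hr1
        have hr : r < i.length := by omega
        obtain ⟨g1, g2, g3, g4⟩ := hcls r hr
        have hnot0 : r ∉ α 0 := by
          intro hcon
          have := hdisj 0 1 (by decide)
          exact (Finset.disjoint_left.1 this) hcon hr1
        rw [← hα0, mem_psiAlpha] at hnot0
        refine ⟨hr, by omega, g2⟩
    refine ⟨⟨i, himem⟩, ?_⟩
    subst hgetD
    refine congrArg (Sigma.mk _) ?_
    refine Prod.ext (Subtype.ext ?_) (Prod.ext (Subtype.ext ?_) (Subtype.ext ?_))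
    · show (fun s : Fin 2 => psiAlpha n i _ _) = α
      funext s
      fin_cases s
      · simpa using hα0
      · simpa using hα1
    · show psiJ n i 0 ((restList n i).getD 1 0) = j1
      rw [hj1e, hexj1]
    · show psiJ n i ((restList n i).getD 1 0) n = j2
      rw [hj2e, hexj2]
  · -- the specification
    intro ip
    exact ⟨(key_lemma n hn ip.1 ip.2).2.2.2.2.1, rfl, rfl, rfl⟩
end

section
/- Let n ≥ 1, i ∈ S_n, p ∈ {0,…,n}, and set (j, q) = Φ(i, p). Then for every p < k ≤ n, every simplicial set X and every simplex x of X of dimension m ≥ n − k, one has D_i^k x = s_q (D_j^{k−1} x). -/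
open CategoryTheory

/-- Vertex map of the derived operator. -/
def derivedFun (f : ℕ → ℕ) : ℕ → ℕ := fun t => if t = 0 then 0 else f (t - 1) + 1

/-- Vertex map of the face map `δ_j`. -/
def deltaFun (j : ℕ) : ℕ → ℕ := fun t => if t < j then t else t + 1

/-- Vertex map of the degeneracy map `σ_j`. -/
def sigmaFun (j : ℕ) : ℕ → ℕ := fun t => if t ≤ j then t else t - 1

/-- Vertex map of the Szczarba operator `D_i^k`, defined by the recursion
`D_∅^0 = id`, `D_i^k = (D_{i'}^k)' s_0 ∂_{i_1 - k}` if `k < i_1`,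
`D_i^k = (D_{i'}^k)'` if `k = i_1`, and `D_i^k = (D_{i'}^{k-1})' s_0` if
`k > i_1`. -/
def DFun : List ℕ → ℕ → ℕ → ℕ
  | [], _ => id
  | (i1 :: i'), k =>
    if k < i1 then deltaFun (i1 - k) ∘ sigmaFun 0 ∘ derivedFun (DFun i' k)
    else if k = i1 then derivedFun (DFun i' k)
    else sigmaFun 0 ∘ derivedFun (DFun i' (k - 1))

/-- The morphism `[b] ⟶ [a]` in the simplex category whose vertex map is (the
monotone clamped version of) `f`.  When `f` is monotone and maps `[b]` into
`[a]`, this is exactly the morphism with vertex map `f`. -/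
def mkHomF (a b : ℕ) (f : ℕ → ℕ) : (SimplexCategory.mk b ⟶ SimplexCategory.mk a) :=
  SimplexCategory.mkHom
    { toFun := fun t => ⟨min ((Finset.range (t.1 + 1)).sup f) a,
        Nat.lt_succ_of_le (min_le_right _ _)⟩
      monotone' := fun u v huv => by
        simp only [Fin.mk_le_mk]
        exact min_le_min
          (Finset.sup_mono (Finset.range_subset_range.mpr (Nat.succ_le_succ huv))) le_rfl }

open Simplicial in
/-- The natural simplicial operator `X_a → X_b` corresponding to the vertex map
`f : [b] → [a]`. -/
def simpOp (X : SSet) (f : ℕ → ℕ) (a b : ℕ) (x : X _⦋a⦌) : X _⦋b⦌ :=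
  X.map (mkHomF a b f).op x

/-- The map `Φ : S_n × [n] → S_{n-1} × [n-1]`, `(i, p) ↦ (j, q)`. -/
def Phi : List ℕ → ℕ → List ℕ × ℕ
  | [], _ => ([], 0)
  | (i1 :: i'), p =>
    if p < i1 then ((i1 - 1) :: (Phi i' p).1, (Phi i' p).2 + 1)
    else if p = i1 ∨ p = i1 + 1 then (i', 0)
    else (i1 :: (Phi i' (p - 1)).1, (Phi i' (p - 1)).2 + 1)

/-!
On vertex maps, `D_i^k` is the monotone map `DFun i k`, so by functoriality of `X` the claim is
the factorisation `DFun i k = DFun j (k - 1) ∘ σ_q`. This is proved by induction along the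
recursion of `Φ`. If `p < i_1`, the head of the recursion for `D_i^k` and for `D_j^{k-1}` is the
same operator, and `σ_q` passes through the derivation as `(g ∘ σ_q)' = g' ∘ σ_{q+1}`. If
`p > i_1 + 1`, then `k - 1 > i_1` and both sides start with `s_0`. If `p ∈ {i_1, i_1 + 1}`, then
`k > i_1`, and `σ_0 ∘ g' = g ∘ σ_0` because `g` fixes `0`.
-/

lemma memS_succ_nil (n : ℕ) : ¬ memS (n + 1) (n + 1) [] := by
  simp [memS]

lemma memS_succ_cons {n i₁ : ℕ} {i' : List ℕ} :
    memS (n + 1) (n + 1) (i₁ :: i') ↔ i₁ ≤ n ∧ memS n n i' := by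
  simp only [memS, List.length_cons, Nat.add_right_cancel_iff]
  constructor
  · rintro ⟨hlen, hb⟩
    refine ⟨by simpa using hb 0 (by omega), hlen, fun t ht => ?_⟩
    have := hb (t + 1) (by omega)
    simp only [List.getD_cons_succ] at this
    omega
  · rintro ⟨hi₁, hlen, hb⟩
    refine ⟨hlen, fun t ht => ?_⟩
    rcases t with _ | t
    · simpa using hi₁
    · have := hb t (by omega)
      simp only [List.getD_cons_succ]
      omega

lemma sigmaFun_monotone (j : ℕ) : Monotone (sigmaFun j) := by
  intro u v h; unfold sigmaFun; split_ifs <;> omega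

lemma deltaFun_monotone (j : ℕ) : Monotone (deltaFun j) := by
  intro u v h; unfold deltaFun; split_ifs <;> omega

lemma Monotone.derivedFun {f : ℕ → ℕ} (hf : Monotone f) : Monotone (derivedFun f) := by
  intro u v h
  unfold _root_.derivedFun
  split_ifs
  · exact le_rfl
  · exact Nat.zero_le _
  · omega
  · exact Nat.succ_le_succ (hf (by omega))

@[simp]
lemma derivedFun_zero (f : ℕ → ℕ) : derivedFun f 0 = 0 := rfl

@[simp]
lemma derivedFun_succ (f : ℕ → ℕ) (t : ℕ) : derivedFun f (t + 1) = f t + 1 := rfl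

@[simp]
lemma sigmaFun_zero (j : ℕ) : sigmaFun j 0 = 0 := by
  simp [sigmaFun]

lemma sigmaFun_of_lt {j t : ℕ} (h : j < t) : sigmaFun j t = t - 1 := by
  simp [sigmaFun, Nat.not_le.mpr h]

lemma derivedFun_comp_sigmaFun (g : ℕ → ℕ) (q : ℕ) :
    derivedFun (g ∘ sigmaFun q) = derivedFun g ∘ sigmaFun (q + 1) := by
  funext t
  rcases t with _ | t
  · rfl
  · by_cases h : t ≤ q
    · simp [sigmaFun, h]
    · obtain ⟨u, rfl⟩ : ∃ u, t = u + 1 := ⟨t - 1, by omega⟩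
      simp [sigmaFun, h]

lemma sigmaFun_zero_comp_derivedFun {g : ℕ → ℕ} (hg : g 0 = 0) :
    sigmaFun 0 ∘ derivedFun g = g ∘ sigmaFun 0 := by
  funext t
  rcases t with _ | t <;> simp [sigmaFun, hg]

lemma DFun_cons_of_lt {i₁ k : ℕ} (i' : List ℕ) (h : k < i₁) :
    DFun (i₁ :: i') k = deltaFun (i₁ - k) ∘ sigmaFun 0 ∘ derivedFun (DFun i' k) := by
  simp [DFun, h]

lemma DFun_cons_self (i₁ : ℕ) (i' : List ℕ) :
    DFun (i₁ :: i') i₁ = derivedFun (DFun i' i₁) := by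
  simp [DFun]

lemma DFun_cons_of_gt {i₁ k : ℕ} (i' : List ℕ) (h : i₁ < k) :
    DFun (i₁ :: i') k = sigmaFun 0 ∘ derivedFun (DFun i' (k - 1)) := by
  simp [DFun, Nat.not_lt.mpr h.le, h.ne']

lemma DFun_monotone : ∀ (i : List ℕ) (k : ℕ), Monotone (DFun i k)
  | [], _ => monotone_id
  | i₁ :: i', k => by
    rcases lt_trichotomy k i₁ with h | rfl | h
    · rw [DFun_cons_of_lt i' h]
      exact (deltaFun_monotone _).comp
        ((sigmaFun_monotone 0).comp (DFun_monotone i' k).derivedFun)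
    · rw [DFun_cons_self]
      exact (DFun_monotone i' _).derivedFun
    · rw [DFun_cons_of_gt i' h]
      exact (sigmaFun_monotone 0).comp (DFun_monotone i' _).derivedFun

@[simp]
lemma DFun_apply_zero : ∀ (i : List ℕ) (k : ℕ), DFun i k 0 = 0
  | [], _ => rfl
  | i₁ :: i', k => by
    rcases lt_trichotomy k i₁ with h | rfl | h
    · simp [DFun_cons_of_lt i' h, deltaFun, h]
    · simp [DFun_cons_self]
    · simp [DFun_cons_of_gt i' h]

lemma Phi_cons_of_lt {i₁ p : ℕ} (i' : List ℕ) (h : p < i₁) :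
    Phi (i₁ :: i') p = ((i₁ - 1) :: (Phi i' p).1, (Phi i' p).2 + 1) := by
  simp [Phi, h]

lemma Phi_cons_of_mem {i₁ p : ℕ} (i' : List ℕ) (h : p = i₁ ∨ p = i₁ + 1) :
    Phi (i₁ :: i') p = (i', 0) := by
  rcases h with rfl | rfl <;> simp [Phi]

lemma Phi_cons_of_gt {i₁ p : ℕ} (i' : List ℕ) (h : i₁ + 1 < p) :
    Phi (i₁ :: i') p = (i₁ :: (Phi i' (p - 1)).1, (Phi i' (p - 1)).2 + 1) := by
  simp [Phi, show ¬ p < i₁ by omega, show p ≠ i₁ by omega, h.ne']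

lemma Phi_snd_le : ∀ {n : ℕ} (i : List ℕ) {p : ℕ}, memS (n + 1) (n + 1) i → p ≤ n + 1 →
    (Phi i p).2 ≤ n
  | n, [], _, hi, _ => absurd hi (memS_succ_nil n)
  | n, i₁ :: i', p, hi, hp => by
    obtain ⟨hi₁, hi'⟩ := memS_succ_cons.mp hi
    by_cases hlt : p < i₁
    · obtain ⟨n, rfl⟩ : ∃ n', n = n' + 1 := ⟨n - 1, by omega⟩
      simpa [Phi_cons_of_lt i' hlt] using Phi_snd_le i' hi' (by omega)
    by_cases hmem : p = i₁ ∨ p = i₁ + 1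
    · simp [Phi_cons_of_mem i' hmem]
    · obtain ⟨n, rfl⟩ : ∃ n', n = n' + 1 := ⟨n - 1, by omega⟩
      simpa [Phi_cons_of_gt i' (by omega : i₁ + 1 < p)] using
        Phi_snd_le i' (p := p - 1) hi' (by omega)

theorem DFun_eq_comp_sigmaFun_Phi : ∀ {n : ℕ} (i : List ℕ) {p k : ℕ},
    memS (n + 1) (n + 1) i → p ≤ n + 1 → p < k →
    DFun i k = DFun (Phi i p).1 (k - 1) ∘ sigmaFun (Phi i p).2
  | n, [], _, _, hi, _, _ => absurd hi (memS_succ_nil n)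
  | n, i₁ :: i', p, k, hi, hp, hpk => by
    obtain ⟨hi₁, hi'⟩ := memS_succ_cons.mp hi
    by_cases hlt : p < i₁
    · obtain ⟨n, rfl⟩ : ∃ n', n = n' + 1 := ⟨n - 1, by omega⟩
      rw [Phi_cons_of_lt i' hlt]
      rcases lt_trichotomy k i₁ with h | rfl | h
      · rw [DFun_cons_of_lt i' h, DFun_cons_of_lt _ (by omega : k - 1 < i₁ - 1),
          DFun_eq_comp_sigmaFun_Phi i' hi' (by omega) hpk, derivedFun_comp_sigmaFun,
          show i₁ - 1 - (k - 1) = i₁ - k by omega]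
        rfl
      · rw [DFun_cons_self, DFun_cons_self, DFun_eq_comp_sigmaFun_Phi i' hi' (by omega) hpk,
          derivedFun_comp_sigmaFun]
      · rw [DFun_cons_of_gt i' h, DFun_cons_of_gt _ (by omega : i₁ - 1 < k - 1),
          DFun_eq_comp_sigmaFun_Phi i' (p := p) (k := k - 1) hi' (by omega) (by omega),
          derivedFun_comp_sigmaFun]
        rfl
    by_cases hmem : p = i₁ ∨ p = i₁ + 1
    · rw [Phi_cons_of_mem i' hmem, DFun_cons_of_gt i' (by omega)]
      exact sigmaFun_zero_comp_derivedFun (DFun_apply_zero i' (k - 1))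
    · have hgt : i₁ + 1 < p := by omega
      obtain ⟨n, rfl⟩ : ∃ n', n = n' + 1 := ⟨n - 1, by omega⟩
      rw [Phi_cons_of_gt i' hgt, DFun_cons_of_gt i' (by omega),
        DFun_cons_of_gt _ (by omega : i₁ < k - 1),
        DFun_eq_comp_sigmaFun_Phi i' (p := p - 1) (k := k - 1) hi' (by omega) (by omega),
        derivedFun_comp_sigmaFun]
      rfl

lemma mkHomF_apply {a b : ℕ} {f : ℕ → ℕ} (hf : Monotone f) (t : Fin (b + 1)) :
    ((mkHomF a b f).toOrderHom t : ℕ) = min (f t) a := by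
  change min ((Finset.range (t.1 + 1)).sup f) a = _
  congr 1
  exact le_antisymm
    (Finset.sup_le fun u hu => hf (Nat.lt_succ_iff.mp (Finset.mem_range.mp hu)))
    (Finset.le_sup (Finset.mem_range.mpr t.1.lt_succ_self))

lemma mkHomF_comp {a b c : ℕ} {f g : ℕ → ℕ} (hf : Monotone f) (hg : Monotone g)
    (hgc : g c ≤ b) : mkHomF a c (f ∘ g) = mkHomF b c g ≫ mkHomF a b f := by
  ext t : 4
  have hgt : g t ≤ b := (hg (Nat.lt_succ_iff.mp t.2)).trans hgc
  simp only [SimplexCategory.comp_toOrderHom, OrderHom.comp_coe, Function.comp_apply,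
    mkHomF_apply hf, mkHomF_apply hg, mkHomF_apply (hf.comp hg), min_eq_left hgt]

open Simplicial in
lemma simpOp_simpOp (X : SSet) {a b c : ℕ} {f g : ℕ → ℕ} (hf : Monotone f) (hg : Monotone g)
    (hgc : g c ≤ b) (x : X _⦋a⦌) :
    simpOp X g b c (simpOp X f a b x) = simpOp X (f ∘ g) a c x := by
  simp only [simpOp, mkHomF_comp hf hg hgc, op_comp, Functor.map_comp_apply]

open Simplicial in
theorem szczarba_D_degeneracy_high_general (n : ℕ) (hn : 1 ≤ n) (i : List ℕ) (hi : memS n n i)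
    (p : ℕ) (hp : p ≤ n) (k : ℕ) (hk1 : p < k)
    (X : SSet) (m : ℕ) (hm : n - k ≤ m) (x : X _⦋m⦌) :
    simpOp X (DFun i k) m (m + k) x
      = simpOp X (sigmaFun (Phi i p).2) (m + (k - 1)) (m + k)
          (simpOp X (DFun (Phi i p).1 (k - 1)) m (m + (k - 1)) x) := by
  obtain ⟨n, rfl⟩ : ∃ n', n = n' + 1 := ⟨n - 1, by omega⟩
  have hq : (Phi i p).2 < m + k := by have := Phi_snd_le i hi hp; omega
  rw [simpOp_simpOp X (DFun_monotone _ _) (sigmaFun_monotone _)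
      ((sigmaFun_of_lt hq).trans_le (by omega)),
    ← DFun_eq_comp_sigmaFun_Phi i hi hp hk1]

open Simplicial in
/-- For `n ≥ 1`, `i ∈ S_n`, `p ∈ {0, …, n}`,
`(j, q) = Φ(i, p)`, `p < k ≤ n`, any simplicial set `X` and any simplex `x` of
dimension `m ≥ n - k`:  `D_i^k x = s_q (D_j^{k-1} x)`. -/
theorem szczarba_D_degeneracy_high (n : ℕ) (hn : 1 ≤ n) (i : List ℕ) (hi : memS n n i)
    (p : ℕ) (hp : p ≤ n) (k : ℕ) (hk1 : p < k) (hk2 : k ≤ n)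
    (X : SSet) (m : ℕ) (hm : n - k ≤ m) (x : X _⦋m⦌) :
    simpOp X (DFun i k) m (m + k) x
      = simpOp X (sigmaFun (Phi i p).2) (m + (k - 1)) (m + k)
          (simpOp X (DFun (Phi i p).1 (k - 1)) m (m + (k - 1)) x) :=
  szczarba_D_degeneracy_high_general n hn i hi p hp k hk1 X m hm x
end
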